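/- arXiv:2212.07361 — 2 statements merged into one kernel-verified Lean document; each statement's English description precedes it below -/
import Mathlib

section
/- Let X be a set and φ ∈ Sym(X) a permutation. Then r(x,y) := (φ(y), y) defines a left non-degenerate idempotent set-theoretic solution of the Yang–Baxter equation on X whose diagonal map q = φ^{-1} is bijective. Moreover, two such solutions r_φ and r_ψ are isomorphic if and only if φ and ψ are conjugate in Sym(X); hence the number of isomorphism classes of such solutions on a finite set X equals the number of partitions of |X|. -/
open Function

variable {X : Type*}

def lam (r : X × X → X × X) (x y : X) : X := (r (x, y)).1

def rho (r : X × X → X × X) (y x : X) : X := (r (x, y)).2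

/-- `r × id` acting on triples. -/
def rl (r : X × X → X × X) : X × X × X → X × X × X :=
  fun p => ((r (p.1, p.2.1)).1, (r (p.1, p.2.1)).2, p.2.2)

/-- `id × r` acting on triples. -/
def rr (r : X × X → X × X) : X × X × X → X × X × X :=
  fun p => (p.1, r (p.2.1, p.2.2))

/-- the Yang–Baxter (braid) equation for a set-theoretic map. -/
def YB (r : X × X → X × X) : Prop :=
  rl r ∘ rr r ∘ rl r = rr r ∘ rl r ∘ rr r

/-- the relation `x + y = y + y` on the free monoid. -/
def simpleRel (X : Type*) : FreeMonoid X → FreeMonoid X → Prop :=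
  fun a b => ∃ x y : X, a = FreeMonoid.of x * FreeMonoid.of y ∧
    b = FreeMonoid.of y * FreeMonoid.of y

/-- the derived structure monoid `A(X,r)` of a left non-degenerate idempotent solution. -/
abbrev DerMon (X : Type*) := (conGen (simpleRel X)).Quotient

def dof (x : X) : DerMon X := (conGen (simpleRel X)).mk' (FreeMonoid.of x)

/-- the diagonal map `q(x) = λ_x⁻¹(x)`. -/
def qmap (L : DerMon X → Equiv.Perm X) (x : X) : X := (L (dof x))⁻¹ x

/-- the product of the structure semigroup realised on pairs `(a, λ_a)`. -/
def sop (L : DerMon X → Equiv.Perm X) (act : Equiv.Perm X → DerMon X →* DerMon X)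
    (a b : DerMon X) : DerMon X := a * act (L a) b

/-- the component `S_u = {(a,λ_a) : λ_a⁻¹(a) = |a|·u}`. -/
def Su (L : DerMon X → Equiv.Perm X) (act : Equiv.Perm X → DerMon X →* DerMon X)
    (len : DerMon X → ℕ) (u : X) : Set (DerMon X) :=
  {a | a ≠ 1 ∧ act (L a)⁻¹ a = dof u ^ len a}

/-- `X_u = {x ∈ X : λ_{dx}(u) = x}`. -/
def Xu (L : DerMon X → Equiv.Perm X) (d : ℕ) (u : X) : Set X :=
  {x | L (dof x ^ d) u = x}

/-- the solution `r_φ(x,y) = (φ(y), y)` attached to a permutation `φ`. -/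
def rSol {X : Type*} (φ : Equiv.Perm X) : X × X → X × X := fun p => (φ p.2, p.2)

lemma rSol_iso_iff_isConj {X : Type*} (φ ψ : Equiv.Perm X) :
    (∃ f : X ≃ X, ∀ p : X × X, Prod.map f f (rSol φ p) = rSol ψ (Prod.map f f p)) ↔
      IsConj φ ψ := by
  constructor
  · rintro ⟨f, hf⟩
    refine isConj_iff.mpr ⟨f, ?_⟩
    ext y
    have h := congrArg Prod.fst (hf (y, f.symm y))
    simp only [rSol, Prod.map, Equiv.apply_symm_apply] at h
    simp [Equiv.Perm.mul_apply, Equiv.Perm.inv_def, h]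
  · intro h
    obtain ⟨c, hc⟩ := isConj_iff.mp h
    refine ⟨c, fun p => ?_⟩
    have : ∀ y, c (φ y) = ψ (c y) := by
      intro y
      have := congrFun (congrArg (fun g : Equiv.Perm X => ⇑g) hc) (c y)
      simpa [Equiv.Perm.mul_apply] using this
    simp [rSol, Prod.map, this]

lemma card_conjClasses_perm (X : Type*) [Fintype X] [DecidableEq X] :
    Nat.card (ConjClasses (Equiv.Perm X)) = Nat.card ((Fintype.card X).Partition) := by
  refine Nat.card_eq_of_bijective
    (Quotient.lift Equiv.Perm.partition
      (fun a b h => (Equiv.Perm.partition_eq_of_isConj.mp h)))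
    ⟨?_, ?_⟩
  · rintro ⟨a⟩ ⟨b⟩ h
    exact Quotient.sound (Equiv.Perm.partition_eq_of_isConj.mpr h)
  · intro p
    set m : Multiset ℕ := p.parts.filter (fun n => 2 ≤ n) with hm
    have hmem : ∀ a ∈ m, 2 ≤ a := fun a ha => (Multiset.mem_filter.mp ha).2
    have hsplit0 : m.sum + (p.parts.filter (fun n => ¬ 2 ≤ n)).sum = p.parts.sum := by
      rw [hm, ← Multiset.sum_add, Multiset.filter_add_not]
    have hps := p.parts_sum
    have hsum : m.sum ≤ Fintype.card X := by omega
    obtain ⟨g, hg⟩ := (Equiv.Perm.exists_with_cycleType_iff X).mpr ⟨hsum, hmem⟩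
    refine ⟨ConjClasses.mk g, ?_⟩
    have hfilt : p.parts.filter (fun n => ¬ 2 ≤ n) =
        Multiset.replicate (Fintype.card X - m.sum) 1 := by
      have hall : ∀ b ∈ p.parts.filter (fun n => ¬ 2 ≤ n), b = 1 := by
        intro b hb
        obtain ⟨hb1, hb2⟩ := Multiset.mem_filter.mp hb
        have := p.parts_pos hb1
        omega
      have hone : p.parts.filter (fun n => ¬ 2 ≤ n) =
          Multiset.replicate (p.parts.filter (fun n => ¬ 2 ≤ n)).card 1 :=
        (Multiset.eq_replicate_card).mpr hall
      have hcard : (p.parts.filter (fun n => ¬ 2 ≤ n)).card = Fintype.card X - m.sum := by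
        have : (p.parts.filter (fun n => ¬ 2 ≤ n)).sum =
            (p.parts.filter (fun n => ¬ 2 ≤ n)).card := by
          rw [hone]; simp [Multiset.sum_replicate]
        omega
      rw [hone, hcard]
    have : g.partition = p := by
      ext1
      rw [Equiv.Perm.parts_partition, hg]
      have hsupp : g.support.card = m.sum := by
        rw [← Equiv.Perm.sum_cycleType, hg]
      rw [hsupp, ← hfilt, hm, Multiset.filter_add_not]
    simpa [ConjClasses.mk] using this

lemma quot_rel_eq_conj {X : Type*} :
    (fun φ ψ : Equiv.Perm X =>
      ∃ f : X ≃ X, ∀ p : X × X, Prod.map f f (rSol φ p) = rSol ψ (Prod.map f f p)) =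
    (fun φ ψ : Equiv.Perm X => IsConj φ ψ) := by
  funext φ ψ
  exact propext (rSol_iso_iff_isConj φ ψ)

/-- `r_φ(x,y) = (φ(y), y)` is a left non-degenerate idempotent solution with
bijective diagonal map `q = φ⁻¹`; `r_φ ≅ r_ψ` iff `φ` and `ψ` are conjugate in
`Sym(X)`; hence on a finite set the number of isomorphism classes of such
solutions equals the number of partitions of `|X|`. -/
theorem statement18 {X : Type*} :
    (∀ φ : Equiv.Perm X,
      YB (rSol φ) ∧ (∀ x : X, Function.Bijective (lam (rSol φ) x)) ∧
      rSol φ ∘ rSol φ = rSol φ ∧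
      (∀ q : X → X, (∀ x : X, lam (rSol φ) x (q x) = x) →
        q = ⇑φ⁻¹ ∧ Function.Bijective q)) ∧
    (∀ φ ψ : Equiv.Perm X,
      (∃ f : X ≃ X, ∀ p : X × X, Prod.map f f (rSol φ p) = rSol ψ (Prod.map f f p)) ↔
        IsConj φ ψ) ∧
    (Finite X →
      Nat.card (Quot (fun φ ψ : Equiv.Perm X =>
        ∃ f : X ≃ X, ∀ p : X × X, Prod.map f f (rSol φ p) = rSol ψ (Prod.map f f p))) =
      Nat.card (Nat.Partition (Nat.card X))) := by
  refine ⟨fun φ => ⟨?_, fun x => φ.bijective, rfl, fun q hq => ?_⟩,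
    fun φ ψ => rSol_iso_iff_isConj φ ψ, fun hfin => ?_⟩
  · funext p; rfl
  · have hq' : q = ⇑φ⁻¹ := by
      funext x
      apply φ.injective
      have := hq x
      simpa [lam, rSol] using this
    exact ⟨hq', hq' ▸ φ⁻¹.bijective⟩
  · classical
    have := Fintype.ofFinite X
    rw [quot_rel_eq_conj]
    have h1 : Nat.card (Quot (fun φ ψ : Equiv.Perm X => IsConj φ ψ)) =
        Nat.card (ConjClasses (Equiv.Perm X)) := rfl
    have h2 : Nat.card X = Fintype.card X := Nat.card_eq_fintype_card
    rw [h1, card_conjClasses_perm, h2]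
end

section
/- Let (X,r) be a finite left non-degenerate idempotent solution of the Yang–Baxter equation with |X| = p a prime. Then either r(x,y) = (φ(y), y) for some permutation φ ∈ Sym(X), or X carries a group structure isomorphic to ℤ/pℤ and r(x,y) = (x·φ(y), 1) for some automorphism φ of this group, where 1 is the identity. -/
open Function

variable {X : Type*}

/-- auxiliary diagonal map of a family of permutations. -/
private def qd (L : X → Equiv.Perm X) (z : X) : X := (L z).symm z

/-- The key dichotomy for a family of permutations satisfying the structural
identity of a left non-degenerate idempotent solution, on a set of prime size:
either all the permutations coincide (and the diagonal map is its inverse),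
or the diagonal map is constant. -/
private theorem s19_dichotomy {X : Type*} [Finite X] [Nonempty X]
    (hp : (Nat.card X).Prime) (L : X → Equiv.Perm X)
    (hR2 : ∀ x y z : X, L x (L y z) = L (L x y) (L (qd L (L x y)) z)) :
    (∃ σ : Equiv.Perm X, (∀ x, L x = σ) ∧ ∀ x y : X, qd L (L x y) = y) ∨
    (∃ u : X, ∀ w : X, qd L w = u) := by
  classical
  set q : X → X := qd L with hqdef
  have hR1 : ∀ z, L z (q z) = z := fun z => (L z).apply_symm_apply z
  -- (†)
  have hdag : ∀ x y : X, L (q (L x y)) (q y) = q (L x y) := by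
    intro x y
    apply (L (L x y)).injective
    rw [← hR2 x y (q y), hR1 y, hR1 (L x y)]
  -- (**)
  have hstar : ∀ x y : X, q (q (L x y)) = q y := by
    intro x y
    apply (L (q (L x y))).injective
    rw [hR1 (q (L x y)), hdag]
  set Q : Set X := Set.range q with hQdef
  have hmemQ : ∀ w, q w ∈ Q := fun w => ⟨w, rfl⟩
  obtain ⟨x₀⟩ := ‹Nonempty X›
  -- q restricted to Q is surjective onto Q, hence injective on Q
  have hqinjQ : ∀ a b : X, a ∈ Q → b ∈ Q → q a = q b → a = b := by
    have hsurj : Function.Surjective (fun u : Q => (⟨q u.1, hmemQ u.1⟩ : Q)) := by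
      rintro ⟨v, w, rfl⟩
      exact ⟨⟨q (L x₀ w), hmemQ _⟩, Subtype.ext (hstar x₀ w)⟩
    have hinj := Finite.injective_iff_surjective.mpr hsurj
    intro a b ha hb h
    have := hinj (a₁ := ⟨a, ha⟩) (a₂ := ⟨b, hb⟩) (Subtype.ext h)
    exact congrArg Subtype.val this
  -- step 4
  have hstep4 : ∀ b w : X, q (q (L (q b) (q w))) = q (q w) := by
    intro b w
    have h := hR2 (q b) (q w) (q (q w))
    rw [hR1 (q w)] at h
    have h3 : L (q (L (q b) (q w))) (q (q w)) = q (L (q b) (q w)) := by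
      apply (L (L (q b) (q w))).injective
      rw [← h, hR1 (L (q b) (q w))]
    apply (L (q (L (q b) (q w)))).injective
    rw [hR1 (q (L (q b) (q w))), h3]
  -- step 3
  have hstep3 : ∀ x w : X, q (L x (q w)) = q (L (q (L x x)) (q w)) := by
    intro x w
    have h1 : q (L x (q w)) = q (q (L x (L x (q w)))) := (hstar x (L x (q w))).symm
    rw [hR2 x x (q w)] at h1
    rw [h1, hstar (L x x) (L (q (L x x)) (q w))]
  -- (E)
  have hE : ∀ x w : X, q (L x (q w)) = q w := by
    intro x w
    rw [hstep3 x w]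
    exact hqinjQ _ _ (hmemQ _) (hmemQ _) (hstep4 (L x x) w)
  -- (G')
  have hG' : ∀ x w : X, L (L x (q w)) = L x := by
    intro x w
    ext t
    have h := hR2 x (q w) ((L (q w)).symm t)
    rw [hE x w, (L (q w)).apply_symm_apply] at h
    exact h.symm
  -- the partition of X into the blocks L x '' Q
  set rel : X → X → Prop := fun x y => ∃ w, y = L x (q w) with hreldef
  have hrel_refl : ∀ x, rel x x := fun x => ⟨x, (hR1 x).symm⟩
  have hLconst : ∀ {x y}, rel x y → L y = L x := by
    rintro x y ⟨w, rfl⟩; exact hG' x w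
  have hrel_symm : ∀ {x y}, rel x y → rel y x := by
    rintro x y h
    refine ⟨x, ?_⟩
    rw [hLconst h, hR1 x]
  have hrel_trans : ∀ {x y z}, rel x y → rel y z → rel x z := by
    rintro x y z h ⟨w, rfl⟩
    exact ⟨w, by rw [hLconst h]⟩
  set s : Setoid X := ⟨rel, ⟨hrel_refl, fun h => hrel_symm h, fun h h' => hrel_trans h h'⟩⟩
    with hsdef
  have hout : ∀ x : X, rel ((Quotient.mk s x).out) x :=
    fun x => Quotient.exact (Quotient.out_eq (Quotient.mk s x))
  have hmem' : ∀ x : X, (L ((Quotient.mk s x).out)).symm x ∈ Q := by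
    intro x
    obtain ⟨w, hw⟩ := hout x
    have h2 := congrArg (L ((Quotient.mk s x).out)).symm hw
    rw [Equiv.symm_apply_apply] at h2
    rw [h2]
    exact hmemQ w
  -- the counting equivalence X ≃ Quotient s × Q
  let e : X ≃ Quotient s × Q :=
    { toFun := fun x => (Quotient.mk s x, ⟨(L ((Quotient.mk s x).out)).symm x, hmem' x⟩)
      invFun := fun p => L (p.1.out) p.2.1
      left_inv := by
        intro x
        exact (L ((Quotient.mk s x).out)).apply_symm_apply x
      right_inv := by
        rintro ⟨c, u, w, hw⟩
        have hrelc : rel c.out (L c.out u) := ⟨w, by rw [hw]⟩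
        have hmkz : Quotient.mk s (L c.out u) = c := by
          have h1 : Quotient.mk s c.out = Quotient.mk s (L c.out u) :=
            Quotient.sound hrelc
          rw [← h1, Quotient.out_eq]
        have hLz : L ((Quotient.mk s (L c.out u)).out) = L c.out :=
          (hLconst (hout (L c.out u))).symm.trans (hLconst hrelc)
        refine Prod.ext hmkz (Subtype.ext ?_)
        simp only
        rw [hLz, Equiv.symm_apply_apply] }
  have hcard : Nat.card X = Nat.card (Quotient s) * Nat.card Q := by
    rw [Nat.card_congr e, Nat.card_prod]
  have hdvd : Nat.card Q ∣ Nat.card X := ⟨Nat.card (Quotient s), by rw [hcard, mul_comm]⟩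
  rcases hp.eq_one_or_self_of_dvd _ hdvd with h1 | hfull
  · -- |Q| = 1 : the diagonal map q is constant
    right
    have hsub : Subsingleton Q := (Nat.card_eq_one_iff_unique.mp h1).1
    refine ⟨q x₀, fun w => ?_⟩
    have := @Subsingleton.elim Q hsub ⟨q w, hmemQ w⟩ ⟨q x₀, hmemQ x₀⟩
    exact congrArg Subtype.val this
  · -- |Q| = p : the diagonal map q is bijective, and L is constant
    left
    have hbij : Function.Bijective (Subtype.val : Q → X) :=
      (Nat.bijective_iff_injective_and_card _).mpr ⟨Subtype.val_injective, hfull⟩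
    have hqsurj : Function.Surjective q := by
      intro v
      obtain ⟨⟨_, w, hw⟩, rfl⟩ := hbij.2 v
      exact ⟨w, hw⟩
    have hqinj : Function.Injective q := Finite.injective_iff_surjective.mpr hqsurj
    have hql : ∀ x y : X, q (L x y) = y := fun x y => hqinj (hstar x y)
    have hLc : ∀ x y : X, L x y = L x₀ y := by
      intro x y
      apply hqinj
      rw [hql, hql]
    exact ⟨L x₀, fun x => Equiv.ext (hLc x), hql⟩

/-- A finite left non-degenerate idempotent solution of prime cardinality `p` is
either of the form `r(x,y) = (φ(y), y)` for a permutation `φ`, or `X` carries a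
group structure isomorphic to `ℤ/pℤ` and `r(x,y) = (x·φ(y), 1)` for some
automorphism `φ` of this group. -/
theorem statement19 {X : Type*} [Finite X] (hp : (Nat.card X).Prime)
    (r : X × X → X × X) (hYB : YB r)
    (hnd : ∀ x : X, Function.Bijective (lam r x)) (hidem : r ∘ r = r) :
    (∃ φ : Equiv.Perm X, ∀ x y : X, r (x, y) = (φ y, y)) ∨
    (∃ (_ : Group X) (φ : X ≃* X),
      Nonempty (X ≃* Multiplicative (ZMod (Nat.card X))) ∧
      ∀ x y : X, r (x, y) = (x * φ y, 1)) := by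
  classical
  haveI : Nonempty X := by
    have : 0 < Nat.card X := hp.pos
    exact (Nat.card_pos_iff.mp this).1
  set L : X → Equiv.Perm X := fun x => Equiv.ofBijective (lam r x) (hnd x) with hLdef
  have hLapp : ∀ x y : X, L x y = lam r x y := fun x y => rfl
  have hpair : ∀ x y : X, r (x, y) = (lam r x y, rho r y x) := fun x y => rfl
  -- idempotency, first component
  have hid1 : ∀ x y : X, lam r (lam r x y) (rho r y x) = lam r x y := by
    intro x y
    have h := congrArg Prod.fst (congrFun hidem (x, y))
    exact h
  -- the second component is determined by the first
  have hrho : ∀ x y : X, rho r y x = qd L (lam r x y) := by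
    intro x y
    apply (L (lam r x y)).injective
    rw [hLapp]
    show lam r (lam r x y) (rho r y x) = L (lam r x y) (qd L (lam r x y))
    rw [hid1 x y]
    exact ((L (lam r x y)).apply_symm_apply (lam r x y)).symm
  -- the Yang–Baxter equation, first component
  have hYB1 : ∀ x y z : X,
      lam r (lam r x y) (lam r (rho r y x) z) = lam r x (lam r y z) := by
    intro x y z
    have h := congrFun hYB (x, y, z)
    exact congrArg (Prod.fst : X × X × X → X) h
  have hR2 : ∀ x y z : X, L x (L y z) = L (L x y) (L (qd L (L x y)) z) := by
    intro x y z
    have h := hYB1 x y z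
    rw [hrho x y] at h
    exact h.symm
  rcases s19_dichotomy hp L hR2 with ⟨σ, hσ, hq⟩ | ⟨u, hu⟩
  · -- case 1 : r (x, y) = (σ y, y)
    left
    refine ⟨σ, fun x y => ?_⟩
    rw [hpair x y, hrho x y]
    have h1 : lam r x y = σ y := by rw [← hσ x]; rfl
    have h2 : qd L (lam r x y) = y := hq x y
    rw [h2, h1]
  · -- case 2 : group structure
    right
    have hR1 : ∀ z : X, L z u = z := by
      intro z
      rw [← hu z]
      exact (L z).apply_symm_apply z
    have hR2' : ∀ x y z : X, L x (L y z) = L (L x y) (L u z) := by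
      intro x y z
      rw [hR2 x y z, hu]
    set φp : Equiv.Perm X := L u with hφdef
    have hφu : φp u = u := hR1 u
    have hCJ : ∀ y z : X, φp (L y z) = L (φp y) (φp z) := by
      intro y z
      exact hR2' u y z
    letI : One X := ⟨u⟩
    letI : Mul X := ⟨fun x y => L x (φp.symm y)⟩
    letI : Inv X := ⟨fun x => φp ((L x).symm u)⟩
    have hmul : ∀ x y : X, x * y = L x (φp.symm y) := fun _ _ => rfl
    have hone : (1 : X) = u := rfl
    have hone_mul : ∀ a : X, 1 * a = a := by
      intro a
      rw [hmul, hone]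
      exact φp.apply_symm_apply a
    have hmul_one : ∀ a : X, a * 1 = a := by
      intro a
      rw [hmul, hone]
      have h : φp.symm u = u := by
        apply φp.injective
        rw [φp.apply_symm_apply, hφu]
      rw [h, hR1 a]
    have hassoc : ∀ a b c : X, a * b * c = a * (b * c) := by
      intro a b c
      rw [hmul, hmul, hmul, hmul]
      have h1 : L (φp.symm b) (φp.symm (φp.symm c)) = φp.symm (L b (φp.symm c)) := by
        apply φp.injective
        rw [hCJ (φp.symm b) (φp.symm (φp.symm c)), φp.apply_symm_apply b,
          φp.apply_symm_apply (φp.symm c), φp.apply_symm_apply (L b (φp.symm c))]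
      calc L (L a (φp.symm b)) (φp.symm c)
          = L (L a (φp.symm b)) (L u (φp.symm (φp.symm c))) := by
            have hLu : L u (φp.symm (φp.symm c)) = φp.symm c :=
              φp.apply_symm_apply (φp.symm c)
            rw [hLu]
        _ = L a (L (φp.symm b) (φp.symm (φp.symm c))) :=
            (hR2' a (φp.symm b) (φp.symm (φp.symm c))).symm
        _ = L a (φp.symm (L b (φp.symm c))) := by rw [h1]
    have hinv_mul : ∀ a : X, a⁻¹ * a = 1 := by
      intro a
      have hrinv : ∀ x : X, x * x⁻¹ = 1 := by
        intro x
        show L x (φp.symm (φp ((L x).symm u))) = u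
        rw [Equiv.symm_apply_apply, Equiv.apply_symm_apply]
      -- standard monoid argument: a right inverse is a left inverse
      have key : a = a⁻¹⁻¹ := by
        calc a = a * 1 := (hmul_one a).symm
        _ = a * (a⁻¹ * a⁻¹⁻¹) := by rw [hrinv a⁻¹]
        _ = a * a⁻¹ * a⁻¹⁻¹ := (hassoc _ _ _).symm
        _ = 1 * a⁻¹⁻¹ := by rw [hrinv a]
        _ = a⁻¹⁻¹ := hone_mul _
      calc a⁻¹ * a = a⁻¹ * a⁻¹⁻¹ := by rw [← key]
      _ = 1 := hrinv a⁻¹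
    letI G : Group X := Group.ofLeftAxioms hassoc hone_mul hinv_mul
    have hφmul : ∀ x y : X, φp (x * y) = φp x * φp y := by
      intro x y
      rw [hmul, hmul, hCJ, φp.apply_symm_apply]
      congr 1
      exact (φp.symm_apply_apply y).symm
    let φ : X ≃* X := { φp with map_mul' := hφmul }
    haveI : Fact (Nat.card X).Prime := ⟨hp⟩
    haveI hcyc : IsCyclic X := isCyclic_of_prime_card rfl
    refine ⟨G, φ, ⟨(zmodCyclicMulEquiv hcyc).symm⟩, fun x y => ?_⟩
    rw [hpair x y, hrho x y]
    have h1 : lam r x y = x * φ y := by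
      show lam r x y = L x (φp.symm (φp y))
      rw [Equiv.symm_apply_apply, hLapp]
    have h2 : qd L (lam r x y) = 1 := by
      rw [hone]
      exact hu _
    rw [h2, h1]
end
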